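/- For q even, the parity-difference generating function of q-decreasing words is D_q(x) = (x^{q+1} − 1)/(x^{q+2} − 1) = Σ_{n≥0} (x^{n(q+2)} − x^{n(q+2)+q+1}); in particular the parity difference is 1 at lengths n ≡ 0 mod (q+2), is −1 at lengths n ≡ q+1 mod (q+2), and 0 otherwise. -/
import Mathlib

/-- A binary word (`List Bool`, `true` = bit 1) is `q`-decreasing if it is a
concatenation `1^{b0} ++ 0^{a1}1^{b1} ++ ... ++ 0^{am}1^{bm}` where every
block `0^a 1^b` with `a > 0` satisfies `q*a > b` (equivalently, every maximal
factor of the form `0^a 1^b` with `a > 0` satisfies `q*a > b`). -/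
inductive QDecreasing (q : ℕ) : List Bool → Prop where
  | ones (m : ℕ) : QDecreasing q (List.replicate m true)
  | snoc (w : List Bool) (a b : ℕ) (ha : 0 < a) (hb : b < q * a)
      (hw : QDecreasing q w) :
      QDecreasing q (w ++ List.replicate a false ++ List.replicate b true)

namespace QDW
open Finset

mutual
def okZ (q : ℕ) : ℕ → List Bool → Bool
  | _, [] => true
  | a, false :: w => okZ q (a+1) w
  | a, true :: w => decide (2 ≤ q*a) && okO q (q*a - 2) w
def okO (q : ℕ) : ℕ → List Bool → Bool
  | _, [] => true
  | r, true :: w => decide (1 ≤ r) && okO q (r-1) w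
  | _, false :: w => okZ q 1 w
end

def okS (q : ℕ) : List Bool → Bool
  | [] => true
  | true :: w => okS q w
  | false :: w => okZ q 1 w

def allW : ℕ → Finset (List Bool)
  | 0 => {[]}
  | n+1 => (allW n).image (true :: ·) ∪ (allW n).image (false :: ·)

lemma mem_allW {n : ℕ} {w : List Bool} : w ∈ allW n ↔ w.length = n := by
  induction n generalizing w with
  | zero => simp [allW, List.length_eq_zero_iff]
  | succ n ih =>
    simp only [allW, Finset.mem_union, Finset.mem_image]
    constructor
    · rintro (⟨v, hv, rfl⟩ | ⟨v, hv, rfl⟩) <;> simp [ih.mp hv]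
    · intro h
      match w with
      | true :: v => exact Or.inl ⟨v, ih.mpr (by simpa using h), rfl⟩
      | false :: v => exact Or.inr ⟨v, ih.mpr (by simpa using h), rfl⟩

def sgn (w : List Bool) : ℤ := (-1) ^ (w.count true)

lemma sgn_cons_true (w : List Bool) : sgn (true :: w) = -sgn w := by
  simp [sgn, List.count_cons, pow_succ]

lemma sgn_cons_false (w : List Bool) : sgn (false :: w) = sgn w := by
  simp [sgn, List.count_cons]

lemma sum_step (n : ℕ) (P : List Bool → Bool) :
    ∑ w ∈ (allW (n+1)).filter (fun w => P w), sgn w =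
      -∑ w ∈ (allW n).filter (fun w => P (true :: w)), sgn w +
      ∑ w ∈ (allW n).filter (fun w => P (false :: w)), sgn w := by
  have hdisj : Disjoint ((allW n).image (true :: ·)) ((allW n).image (false :: ·)) := by
    simp only [Finset.disjoint_left, Finset.mem_image]
    rintro w ⟨v, _, rfl⟩ ⟨u, _, h⟩
    simp at h
  rw [show allW (n+1) = (allW n).image (true :: ·) ∪ (allW n).image (false :: ·) from rfl,
    Finset.filter_union, Finset.sum_union (Finset.disjoint_filter_filter hdisj),
    Finset.filter_image, Finset.filter_image,
    Finset.sum_image (by intro a _ b _ h; simpa using h),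
    Finset.sum_image (by intro a _ b _ h; simpa using h)]
  simp [sgn_cons_true, sgn_cons_false, Finset.sum_neg_distrib]

def Dh (q n : ℕ) : ℤ := if n % (q+2) = 0 then 1 else if n % (q+2) = q+1 then -1 else 0

def Oh (q r m : ℕ) : ℤ := Dh q m + (if r + 1 ≤ m then (-1)^r * Dh q (m - r - 1) else 0)

def Zh (q : ℕ) : ℕ → ℕ → ℤ
  | _, 0 => 1
  | a, n+1 => Zh q (a+1) n - Oh q (q*a - 2) n

lemma mod_succ (n p : ℕ) (hp : 0 < p) :
    (n+1) % p = if n % p + 1 = p then 0 else n % p + 1 := by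
  conv_lhs => rw [← Nat.mod_add_mod]
  split_ifs with h
  · rw [h, Nat.mod_self]
  · exact Nat.mod_eq_of_lt (by have := Nat.mod_lt n hp; omega)

lemma sum_Dh (q n : ℕ) : ∑ i ∈ range n, Dh q i = if n % (q+2) = 0 then 0 else 1 := by
  induction n with
  | zero => simp
  | succ n ih =>
    rw [sum_range_succ, ih]
    have hm := Nat.mod_lt n (show 0 < q+2 by omega)
    have hs := mod_succ n (q+2) (by omega)
    unfold Dh
    split_ifs at * <;> omega

lemma Wlem (q : ℕ) : ∀ k, ∑ j ∈ range (k+1),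
    (if (q+1)*j ≤ k then Dh q (k - (q+1)*j) else 0) = if k % (q+2) = 0 then 1 else 0 := by
  intro k
  induction k using Nat.strong_induction_on with
  | _ k ih =>
    rw [sum_range_succ']
    simp only [Nat.mul_zero, Nat.zero_le, if_true, Nat.sub_zero]
    rcases lt_or_ge k (q+1) with hk | hk
    · have hz : ∑ j ∈ range k, (if (q+1)*(j+1) ≤ k then Dh q (k - (q+1)*(j+1)) else 0) = 0 := by
        apply Finset.sum_eq_zero
        intro j _
        rw [if_neg]
        have h1 : q+1 ≤ (q+1)*(j+1) := Nat.le_mul_of_pos_right _ (by omega)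
        omega
      rw [hz]
      have hkm : k % (q+2) = k := Nat.mod_eq_of_lt (by omega)
      unfold Dh
      rw [hkm]
      split_ifs <;> omega
    · have hsh : ∑ j ∈ range k, (if (q+1)*(j+1) ≤ k then Dh q (k - (q+1)*(j+1)) else 0)
          = ∑ j ∈ range (k-(q+1)+1), (if (q+1)*j ≤ k-(q+1) then Dh q ((k-(q+1)) - (q+1)*j) else 0) := by
        rw [← Finset.sum_subset (Finset.range_subset_range.mpr (show k-(q+1)+1 ≤ k by omega))]
        · apply Finset.sum_congr rfl
          intro j _
          have he : (q+1)*(j+1) = (q+1)*j + (q+1) := by ring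
          by_cases hc : (q+1)*j ≤ k-(q+1)
          · rw [if_pos (by omega), if_pos hc]
            congr 1
            omega
          · rw [if_neg (by omega), if_neg hc]
        · intro j _ hj
          rw [if_neg]
          simp only [Finset.mem_range, not_lt] at hj
          have h1 : j ≤ (q+1)*j := Nat.le_mul_of_pos_left _ (by omega)
          have he : (q+1)*(j+1) = (q+1)*j + (q+1) := by ring
          omega
      rw [hsh, ih (k-(q+1)) (by omega)]
      have hmod : (k+1) % (q+2) = (k - (q+1)) % (q+2) := by
        rw [show k+1 = (k-(q+1)) + (q+2) by omega, Nat.add_mod_right]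
      have hm := Nat.mod_lt k (show 0 < q+2 by omega)
      have hm2 := Nat.mod_lt (k-(q+1)) (show 0 < q+2 by omega)
      have hs := mod_succ k (q+2) (by omega)
      unfold Dh
      split_ifs at * <;> omega

lemma Vlem (q n : ℕ) (hq : 1 ≤ q) : ∑ j ∈ range n,
    (if (q+1)*j + q ≤ n then Dh q (n - q - (q+1)*j) else 0)
    = if n % (q+2) = q then 1 else 0 := by
  rcases lt_or_ge n q with hn | hn
  · have hz : ∀ j ∈ range n, (if (q+1)*j + q ≤ n then Dh q (n - q - (q+1)*j) else 0) = 0 := by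
      intro j _
      rw [if_neg (by omega)]
    rw [Finset.sum_eq_zero hz, if_neg (by rw [Nat.mod_eq_of_lt (by omega)]; omega)]
  · have hsub : ∑ j ∈ range n, (if (q+1)*j + q ≤ n then Dh q (n - q - (q+1)*j) else 0)
        = ∑ j ∈ range (n-q+1), (if (q+1)*j ≤ n-q then Dh q ((n-q) - (q+1)*j) else 0) := by
      rw [← Finset.sum_subset (Finset.range_subset_range.mpr (show n-q+1 ≤ n by omega))]
      · apply Finset.sum_congr rfl
        intro j _
        by_cases hc : (q+1)*j ≤ n - q
        · rw [if_pos (by omega), if_pos hc]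
        · rw [if_neg (by omega), if_neg hc]
      · intro j _ hj
        simp only [Finset.mem_range, not_lt] at hj
        have h1 : j ≤ (q+1)*j := Nat.le_mul_of_pos_left _ (by omega)
        rw [if_neg (by omega)]
    rw [hsub, Wlem]
    have hmod : n % (q+2) = ((n-q) % (q+2) + q) % (q+2) := by
      conv_lhs => rw [show n = (n-q) + q by omega]
      conv_lhs => rw [Nat.add_mod, Nat.mod_eq_of_lt (show q < q+2 by omega)]
    have hm := Nat.mod_lt (n-q) (show 0 < q+2 by omega)
    have h2 : ((n-q) % (q+2) + q) % (q+2) =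
        if (n-q) % (q+2) + q < q+2 then (n-q) % (q+2) + q else (n-q) % (q+2) + q - (q+2) := by
      split_ifs with h
      · exact Nat.mod_eq_of_lt h
      · rw [Nat.mod_eq_sub_mod (by omega)]
        exact Nat.mod_eq_of_lt (by omega)
    split_ifs at * <;> omega

lemma Zh_eq (q : ℕ) : ∀ n a, Zh q a n = 1 - ∑ j ∈ range n, Oh q (q*(a+j) - 2) (n-1-j) := by
  intro n
  induction n with
  | zero => intro a; simp [Zh]
  | succ n ih =>
    intro a
    show Zh q (a+1) n - Oh q (q*a - 2) n = _
    rw [ih (a+1), sum_range_succ']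
    have h1 : ∀ j, Oh q (q*(a+(j+1)) - 2) (n+1-1-(j+1)) = Oh q (q*(a+1+j) - 2) (n-1-j) := by
      intro j
      congr 1
      · ring_nf
      · omega
    simp only [h1, Nat.add_zero, Nat.mul_zero]
    norm_num
    ring

lemma Zh1 (q : ℕ) (hq2 : 2 ≤ q) (hqe : Even q) (n : ℕ) :
    Zh q 1 n = Dh q (n+1) + Dh q n := by
  rw [Zh_eq]
  have hterm : ∀ j ∈ range n, Oh q (q*(1+j) - 2) (n-1-j)
      = Dh q (n-1-j) + (if (q+1)*j + q ≤ n then Dh q (n - q - (q+1)*j) else 0) := by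
    intro j hj
    simp only [Finset.mem_range] at hj
    unfold Oh
    congr 1
    have hqj : q + q*j = q*(1+j) := by ring
    have hq2' : 2 ≤ q*(1+j) := le_trans hq2 (Nat.le_mul_of_pos_right _ (by omega))
    have hjq : j ≤ (q+1)*j := Nat.le_mul_of_pos_left _ (by omega)
    have hqj2 : (q+1)*j = q*j + j := by ring
    by_cases hc : (q+1)*j + q ≤ n
    · rw [if_pos (by omega), if_pos hc]
      have hev : Even (q*(1+j) - 2) := by
        rw [Nat.even_sub hq2']
        simp [hqe.mul_right _]
      rw [hev.neg_one_pow, one_mul]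
      congr 1
      omega
    · rw [if_neg (by omega), if_neg hc]
  rw [Finset.sum_congr rfl hterm, Finset.sum_add_distrib]
  rw [Finset.sum_range_reflect (fun i => Dh q i) n, sum_Dh, Vlem q n (by omega)]
  have hm := Nat.mod_lt n (show 0 < q+2 by omega)
  have hs := mod_succ n (q+2) (by omega)
  unfold Dh
  split_ifs at * <;> omega

lemma Oh_zero (q r : ℕ) : Oh q r 0 = 1 := by simp [Oh, Dh]

lemma Oh_rec (q : ℕ) (hq2 : 2 ≤ q) (hqe : Even q) (r n : ℕ) :
    Oh q r (n+1) = Zh q 1 n - (if 1 ≤ r then Oh q (r-1) n else 0) := by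
  rw [Zh1 q hq2 hqe]
  rcases Nat.eq_zero_or_pos r with rfl | hr
  · simp [Oh]
  · rw [if_pos (show 1 ≤ r from hr)]
    unfold Oh
    have hps : (-1 : ℤ)^r = -(-1 : ℤ)^(r-1) := by
      conv_lhs => rw [show r = (r-1)+1 by omega, pow_succ]
      ring
    by_cases hc : r ≤ n
    · rw [if_pos (by omega), if_pos (by omega), hps]
      have : n + 1 - r - 1 = n - (r-1) - 1 := by omega
      rw [this]
      ring
    · rw [if_neg (by omega), if_neg (by omega)]
      ring

def sumO (q r n : ℕ) : ℤ := ∑ w ∈ (allW n).filter (fun w => okO q r w), sgn w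
def sumZ (q a n : ℕ) : ℤ := ∑ w ∈ (allW n).filter (fun w => okZ q a w), sgn w
def sumS (q n : ℕ) : ℤ := ∑ w ∈ (allW n).filter (fun w => okS q w), sgn w

lemma sum_base (P : List Bool → Bool) (hP : P [] = true) :
    ∑ w ∈ (allW 0).filter (fun w => P w), sgn w = 1 := by
  show ∑ w ∈ ({[]} : Finset (List Bool)).filter (fun w => P w), sgn w = 1
  rw [Finset.filter_singleton, if_pos (by simp [hP])]
  simp [sgn]

lemma sumO_zero (q r : ℕ) : sumO q r 0 = 1 := sum_base _ rfl
lemma sumZ_zero (q a : ℕ) : sumZ q a 0 = 1 := sum_base _ rfl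
lemma sumS_zero (q : ℕ) : sumS q 0 = 1 := sum_base _ rfl

lemma sumO_rec (q r n : ℕ) :
    sumO q r (n+1) = sumZ q 1 n - (if 1 ≤ r then sumO q (r-1) n else 0) := by
  rw [sumO, sum_step]
  show -∑ w ∈ (allW n).filter (fun w => decide (1 ≤ r) && okO q (r-1) w), sgn w + sumZ q 1 n = _
  by_cases hr : 1 ≤ r
  · rw [if_pos hr]
    simp only [decide_eq_true hr, Bool.true_and]
    rw [← sumO]
    ring
  · rw [if_neg hr]
    simp only [decide_eq_false hr, Bool.false_and]
    simp

lemma sumZ_rec (q a n : ℕ) :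
    sumZ q a (n+1) = sumZ q (a+1) n - (if 2 ≤ q*a then sumO q (q*a-2) n else 0) := by
  rw [sumZ, sum_step]
  show -∑ w ∈ (allW n).filter (fun w => decide (2 ≤ q*a) && okO q (q*a-2) w), sgn w
      + sumZ q (a+1) n = _
  by_cases hr : 2 ≤ q*a
  · rw [if_pos hr]
    simp only [decide_eq_true hr, Bool.true_and]
    rw [← sumO]
    ring
  · rw [if_neg hr]
    simp only [decide_eq_false hr, Bool.false_and]
    simp

lemma sumS_rec (q n : ℕ) : sumS q (n+1) = sumZ q 1 n - sumS q n := by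
  rw [sumS, sum_step]
  show -sumS q n + sumZ q 1 n = _
  ring

lemma sums_eq (q : ℕ) (hq2 : 2 ≤ q) (hqe : Even q) :
    ∀ n, (∀ r, sumO q r n = Oh q r n) ∧ (∀ a, 1 ≤ a → sumZ q a n = Zh q a n) := by
  intro n
  induction n with
  | zero =>
    refine ⟨fun r => by rw [sumO_zero, Oh_zero], fun a _ => by rw [sumZ_zero]; rfl⟩
  | succ n ih =>
    obtain ⟨ihO, ihZ⟩ := ih
    constructor
    · intro r
      rw [sumO_rec, Oh_rec q hq2 hqe, ihZ 1 le_rfl]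
      congr 1
      split_ifs with h
      · rw [ihO]
      · rfl
    · intro a ha
      have hga : 2 ≤ q*a := le_trans hq2 (Nat.le_mul_of_pos_right _ (by omega))
      rw [sumZ_rec, if_pos hga, ihZ (a+1) (by omega), ihO]
      rfl

lemma sumS_eq (q : ℕ) (hq2 : 2 ≤ q) (hqe : Even q) (n : ℕ) : sumS q n = Dh q n := by
  induction n with
  | zero => rw [sumS_zero]; simp [Dh]
  | succ n ih =>
    rw [sumS_rec, ih, (sums_eq q hq2 hqe n).2 1 le_rfl, Zh1 q hq2 hqe]
    ring

lemma okO_ones (q : ℕ) : ∀ b r, b ≤ r → okO q r (List.replicate b true) = true := by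
  intro b
  induction b with
  | zero => intro r _; rfl
  | succ b ih =>
    intro r hr
    show (decide (1 ≤ r) && okO q (r-1) (List.replicate b true)) = true
    rw [decide_eq_true (by omega), Bool.true_and]
    exact ih _ (by omega)

lemma okZ_block (q : ℕ) : ∀ a' c b, b < q*(c+a') → 1 ≤ c + a' →
    okZ q c (List.replicate a' false ++ List.replicate b true) = true := by
  intro a'
  induction a' with
  | zero =>
    intro c b hb _
    rw [Nat.add_zero] at hb
    simp only [List.replicate, List.nil_append]
    match b with
    | 0 => rfl
    | b+1 =>
      show (decide (2 ≤ q*c) && okO q (q*c - 2) (List.replicate b true)) = true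
      rw [decide_eq_true (by omega), Bool.true_and]
      exact okO_ones q b _ (by omega)
  | succ a' ih =>
    intro c b hb _
    show okZ q (c+1) (List.replicate a' false ++ List.replicate b true) = true
    exact ih (c+1) b (by rw [show c+1+a' = c + (a'+1) by omega]; exact hb) (by omega)

lemma ok_append (q a b : ℕ) (ha : 0 < a) (hb : b < q*a) :
    ∀ w : List Bool,
      (∀ c, okZ q c w = true →
        okZ q c (w ++ (List.replicate a false ++ List.replicate b true)) = true) ∧
      (∀ r, okO q r w = true →
        okO q r (w ++ (List.replicate a false ++ List.replicate b true)) = true) ∧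
      (okS q w = true →
        okS q (w ++ (List.replicate a false ++ List.replicate b true)) = true) := by
  intro w
  induction w with
  | nil =>
    refine ⟨fun c _ => ?_, fun r _ => ?_, fun _ => ?_⟩
    · rw [List.nil_append]
      exact okZ_block q a c b (lt_of_lt_of_le hb (by nlinarith)) (by omega)
    · rw [List.nil_append]
      match a, ha with
      | a+1, _ =>
        show okZ q 1 (List.replicate a false ++ List.replicate b true) = true
        exact okZ_block q a 1 b (by rw [show 1+a = a+1 by omega]; exact hb) (by omega)
    · rw [List.nil_append]
      match a, ha with
      | a+1, _ =>
        show okZ q 1 (List.replicate a false ++ List.replicate b true) = true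
        exact okZ_block q a 1 b (by rw [show 1+a = a+1 by omega]; exact hb) (by omega)
  | cons x w ih =>
    obtain ⟨ihZ, ihO, ihS⟩ := ih
    match x with
    | true =>
      refine ⟨fun c hc => ?_, fun r hr => ?_, fun hs => ?_⟩
      · rw [List.cons_append]
        show (decide (2 ≤ q*c) && okO q (q*c - 2) (w ++ _)) = true
        have hc' : (decide (2 ≤ q*c) && okO q (q*c - 2) w) = true := hc
        rw [Bool.and_eq_true] at hc' ⊢
        exact ⟨hc'.1, ihO _ hc'.2⟩
      · rw [List.cons_append]
        show (decide (1 ≤ r) && okO q (r - 1) (w ++ _)) = true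
        have hr' : (decide (1 ≤ r) && okO q (r - 1) w) = true := hr
        rw [Bool.and_eq_true] at hr' ⊢
        exact ⟨hr'.1, ihO _ hr'.2⟩
      · rw [List.cons_append]
        exact ihS hs
    | false =>
      refine ⟨fun c hc => ?_, fun r hr => ?_, fun hs => ?_⟩
      · rw [List.cons_append]
        exact ihZ _ hc
      · rw [List.cons_append]
        exact ihZ _ hr
      · rw [List.cons_append]
        exact ihZ _ hs

lemma okS_of_qdec {q : ℕ} {w : List Bool} (h : QDecreasing q w) : okS q w = true := by
  induction h with
  | ones m =>
    induction m with
    | zero => rfl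
    | succ m ih => exact ih
  | snoc w a b ha hb hw ih =>
    rw [List.append_assoc]
    exact (ok_append q a b ha hb w).2.2 ih

lemma qdec_cons_true {q : ℕ} {w : List Bool} (h : QDecreasing q w) :
    QDecreasing q (true :: w) := by
  induction h with
  | ones m =>
    have : true :: List.replicate m true = List.replicate (m+1) true := rfl
    rw [this]
    exact QDecreasing.ones (m+1)
  | snoc w a b ha hb hw ih =>
    have : true :: (w ++ List.replicate a false ++ List.replicate b true)
        = (true :: w) ++ List.replicate a false ++ List.replicate b true := by simp
    rw [this]
    exact QDecreasing.snoc _ a b ha hb ih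

lemma qdec_block {q a b : ℕ} (ha : 0 < a) (hb : b < q*a) :
    QDecreasing q (List.replicate a false ++ List.replicate b true) := by
  have := QDecreasing.snoc [] a b ha hb (QDecreasing.ones 0)
  simpa using this

lemma qdec_prepend_block {q a b : ℕ} (ha : 0 < a) (hb : b < q*a) :
    ∀ w : List Bool, QDecreasing q w → (w = [] ∨ w.head? = some false) →
    QDecreasing q (List.replicate a false ++ (List.replicate b true ++ w)) := by
  intro w hw
  induction hw with
  | ones m =>
    intro hh
    have hm : m = 0 := by
      rcases hh with h | h
      · match m, h with
        | 0, _ => rfl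
      · match m with
        | 0 => rfl
        | m+1 => simp [List.replicate] at h
    subst hm
    simpa using qdec_block ha hb
  | snoc w a' b' ha' hb' hw ih =>
    intro hh
    rcases eq_or_ne w [] with rfl | hne
    · have := QDecreasing.snoc _ a' b' ha' hb' (qdec_block ha hb)
      have he : List.replicate a false ++ List.replicate b true ++ List.replicate a' false
            ++ List.replicate b' true
          = List.replicate a false ++ (List.replicate b true ++
            ([] ++ List.replicate a' false ++ List.replicate b' true)) := by simp
      rw [← he]
      exact this
    · have hhw : w = [] ∨ w.head? = some false := by
        right
        rcases hh with h | h
        · exact absurd (List.append_eq_nil_iff.mp ((List.append_eq_nil_iff.mp h).1)).1 hne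
        · match w, hne with
          | x :: t, _ =>
            simp only [List.cons_append, List.head?] at h ⊢
            exact h
      have := QDecreasing.snoc _ a' b' ha' hb' (ih hhw)
      have he : List.replicate a false ++ (List.replicate b true ++ w) ++
            List.replicate a' false ++ List.replicate b' true
          = List.replicate a false ++ (List.replicate b true ++
            (w ++ List.replicate a' false ++ List.replicate b' true)) := by simp
      rw [← he]
      exact this

lemma qdec_of_ok {q : ℕ} (hq : 1 ≤ q) : ∀ n (w : List Bool), w.length ≤ n →
    (okS q w = true → QDecreasing q w) ∧
    (∀ a, 1 ≤ a → okZ q a w = true →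
      QDecreasing q (List.replicate a false ++ w)) ∧
    (∀ r a b, 1 ≤ a → b + r < q*a → okO q r w = true →
      QDecreasing q (List.replicate a false ++ (List.replicate b true ++ w))) := by
  intro n
  induction n with
  | zero =>
    intro w hw
    have : w = [] := List.length_eq_zero_iff.mp (by omega)
    subst this
    refine ⟨fun _ => QDecreasing.ones 0, fun a ha _ => ?_, fun r a b ha hb _ => ?_⟩
    · simpa using qdec_block ha (show 0 < q*a by positivity)
    · simpa using qdec_block ha (show b < q*a by omega)
  | succ n ih =>
    intro w hw
    match w with
    | [] =>
      exact ih [] (by simp)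
    | true :: w =>
      obtain ⟨ihS, ihZ, ihO⟩ := ih w (by simpa using hw)
      refine ⟨fun hs => ?_, fun a ha hz => ?_, fun r a b ha hbr ho => ?_⟩
      · exact qdec_cons_true (ihS hs)
      · have hz' : (decide (2 ≤ q*a) && okO q (q*a - 2) w) = true := hz
        rw [Bool.and_eq_true, decide_eq_true_eq] at hz'
        have := ihO (q*a - 2) a 1 ha (by omega) hz'.2
        simpa using this
      · have ho' : (decide (1 ≤ r) && okO q (r - 1) w) = true := ho
        rw [Bool.and_eq_true, decide_eq_true_eq] at ho'
        have := ihO (r-1) a (b+1) ha (by omega) ho'.2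
        have he : List.replicate a false ++ (List.replicate (b+1) true ++ w)
            = List.replicate a false ++ (List.replicate b true ++ (true :: w)) := by
          rw [List.replicate_succ']
          simp
        rw [he] at this
        exact this
    | false :: w =>
      obtain ⟨ihS, ihZ, ihO⟩ := ih w (by simpa using hw)
      refine ⟨fun hs => ?_, fun a ha hz => ?_, fun r a b ha hbr ho => ?_⟩
      · have hz : okZ q 1 w = true := hs
        have := ihZ 1 le_rfl hz
        simpa using this
      · have hz' : okZ q (a+1) w = true := hz
        have := ihZ (a+1) (by omega) hz'
        have he : List.replicate (a+1) false ++ w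
            = List.replicate a false ++ (false :: w) := by
          rw [List.replicate_succ']
          simp
        rw [he] at this
        exact this
      · have hz : okZ q 1 w = true := ho
        have h1 := ihZ 1 le_rfl hz
        have h1' : QDecreasing q (false :: w) := by simpa using h1
        exact qdec_prepend_block ha (by omega) (false :: w) h1' (by simp)

lemma okS_iff_qdec {q : ℕ} (hq : 1 ≤ q) (w : List Bool) :
    okS q w = true ↔ QDecreasing q w :=
  ⟨fun h => (qdec_of_ok hq w.length w le_rfl).1 h, okS_of_qdec⟩


end QDW

theorem qdecreasing_parity_difference_even_q (q : ℕ) (hq : 1 ≤ q) (hqe : Even q) (n : ℕ) :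
    (Nat.card {w : List Bool // w.length = n ∧ QDecreasing q w ∧ Even (w.count true)} : ℤ) -
      (Nat.card {w : List Bool // w.length = n ∧ QDecreasing q w ∧ Odd (w.count true)} : ℤ) =
    if n % (q + 2) = 0 then 1 else if n % (q + 2) = q + 1 then -1 else 0 := by
  classical
  have hq2 : 2 ≤ q := by
    rcases hqe with ⟨k, hk⟩
    omega
  set S := (QDW.allW n).filter (fun w => QDW.okS q w) with hS
  set E := S.filter (fun w => Even (w.count true)) with hE
  set O := S.filter (fun w => ¬ Even (w.count true)) with hO
  have hbE : Nat.card {w : List Bool // w.length = n ∧ QDecreasing q w ∧ Even (w.count true)}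
      = E.card := by
    rw [← Nat.card_eq_finsetCard]
    apply Nat.card_congr
    apply Equiv.subtypeEquivRight
    intro w
    simp only [hE, hS, Finset.mem_filter, QDW.mem_allW, QDW.okS_iff_qdec hq, and_assoc]
  have hbO : Nat.card {w : List Bool // w.length = n ∧ QDecreasing q w ∧ Odd (w.count true)}
      = O.card := by
    rw [← Nat.card_eq_finsetCard]
    apply Nat.card_congr
    apply Equiv.subtypeEquivRight
    intro w
    simp only [hO, hS, Finset.mem_filter, QDW.mem_allW, QDW.okS_iff_qdec hq, and_assoc,
      Nat.not_even_iff_odd]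
  have hsplit : QDW.sumS q n = (E.card : ℤ) - (O.card : ℤ) := by
    have h1 : QDW.sumS q n = ∑ w ∈ E, QDW.sgn w + ∑ w ∈ O, QDW.sgn w :=
      (Finset.sum_filter_add_sum_filter_not S (fun w => Even (w.count true)) QDW.sgn).symm
    have h2 : ∑ w ∈ E, QDW.sgn w = (E.card : ℤ) := by
      rw [Finset.sum_congr rfl (fun w hw => ?_), Finset.sum_const, nsmul_eq_mul, mul_one]
      have hev : Even (w.count true) := (Finset.mem_filter.mp hw).2
      exact hev.neg_one_pow
    have h3 : ∑ w ∈ O, QDW.sgn w = -(O.card : ℤ) := by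
      rw [Finset.sum_congr rfl (fun w hw => ?_), Finset.sum_const, nsmul_eq_mul, mul_neg_one]
      have hod : Odd (w.count true) :=
        Nat.not_even_iff_odd.mp (Finset.mem_filter.mp hw).2
      exact hod.neg_one_pow
    rw [h1, h2, h3]
    ring
  rw [hbE, hbO, ← hsplit, QDW.sumS_eq q hq2 hqe]
  rfl
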